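/- arXiv:quant-ph/0208108 — 6 statements merged into one kernel-verified Lean document; each statement's English description precedes it below -/
import Mathlib

section
/- Let A be a unital complex star-algebra, ℏ > 0 and ε real numbers, and let x, w ∈ A satisfy: x commutes with w and with star w; x·(star x) − (star x)·x = ℏ·1; and w·(star w) − (star w)·w = (ε − |γ|²)·ℏ·1, where γ ∈ ℂ. Then for any δ ∈ ℂ and u ∈ ℂ, the output element y := γ·x + (δ·u)·1 + w satisfies y·(star y) − (star y)·y = ε·ℏ·1. -/
/-- If the cross terms commute, the self-commutator of a sum splits. -/
lemma comm_add_split {A : Type*} [Ring A] [StarRing A] (a b : A)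
    (ha : a * star b = star b * a) (hb : b * star a = star a * b) :
    (a + b) * star (a + b) - star (a + b) * (a + b)
      = (a * star a - star a * a) + (b * star b - star b * b) := by
  simp only [star_add, add_mul, mul_add]
  rw [ha, hb]
  abel

/-- The output element `y = γ·x + δ·u·1 + w` of the discrete linear Markovian quantum
open oscillator satisfies the commutation relation `[y, y*] = ε·ℏ·1`. -/
theorem output_commutation_relation
    {A : Type*} [Ring A] [Algebra ℂ A] [StarRing A] [StarModule ℂ A]
    (ℏ : ℝ) (hℏ : 0 < ℏ) (ε : ℝ) (γ : ℂ) (x w : A)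
    (hxw : x * w = w * x)
    (hxws : x * star w = star w * x)
    (hx : x * star x - star x * x = (ℏ : ℂ) • (1 : A))
    (hw : w * star w - star w * w
        = (((ε - ‖γ‖ ^ 2) * ℏ : ℝ) : ℂ) • (1 : A)) :
    ∀ δ u : ℂ,
      (γ • x + (δ * u) • (1 : A) + w) * star (γ • x + (δ * u) • (1 : A) + w)
        - star (γ • x + (δ * u) • (1 : A) + w) * (γ • x + (δ * u) • (1 : A) + w)
        = ((ε * ℏ : ℝ) : ℂ) • (1 : A) := by
  intro δ u
  have hwx : w * star x = star x * w := by
    have := congrArg star hxws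
    simpa [star_mul] using this
  set c : ℂ := δ * u with hc
  have h1 : (γ • x + c • (1 : A)) * star w = star w * (γ • x + c • (1 : A)) := by
    simp [add_mul, mul_add, smul_mul_assoc, mul_smul_comm, hxws]
  have h2 : w * star (γ • x + c • (1 : A)) = star (γ • x + c • (1 : A)) * w := by
    simp [star_add, star_smul, add_mul, mul_add, smul_mul_assoc, mul_smul_comm, hwx]
  rw [comm_add_split _ _ h1 h2]
  have h3 : (γ • x) * star (c • (1 : A)) = star (c • (1 : A)) * (γ • x) := by
    simp [star_smul, smul_mul_assoc, mul_smul_comm, smul_smul, mul_comm]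
  have h4 : (c • (1 : A)) * star (γ • x) = star (γ • x) * (c • (1 : A)) := by
    simp [star_smul, smul_mul_assoc, mul_smul_comm, smul_smul, mul_comm]
  rw [comm_add_split _ _ h3 h4]
  have h5 : (c • (1 : A)) * star (c • (1 : A)) - star (c • (1 : A)) * (c • (1 : A)) = 0 := by
    simp [star_smul, smul_smul, mul_comm]
  have h6 : (γ • x) * star (γ • x) - star (γ • x) * (γ • x)
      = (γ * star γ) • (x * star x - star x * x) := by
    simp [star_smul, smul_mul_assoc, mul_smul_comm, smul_smul, smul_sub, mul_comm]
  rw [h5, h6, hx, hw]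
  rw [smul_smul]
  rw [add_zero, ← add_smul]
  congr 1
  have : γ * star γ = ((‖γ‖ ^ 2 : ℝ) : ℂ) := by
    rw [Complex.star_def, Complex.mul_conj]
    simp [Complex.sq_norm]
  rw [this]
  push_cast
  ring
end

section
/- Nondemolition property of the output: let A be a unital complex star-algebra, ℏ > 0, φ, β, γ, δ ∈ ℂ, u, u' ∈ ℂ, and let x, v, w ∈ A satisfy: x commutes with each of v, star v, w, star w; v commutes with w; x·(star x) − (star x)·x = ℏ·1; and w·(star v) − (star v)·w = −(conj(φ)·γ)·ℏ·1. Then the updated system element x' := φ·x + (β·u)·1 + v and the output element y := γ·x + (δ·u')·1 + w satisfy y·x' = x'·y and y·(star x') = (star x')·y, i.e. the output commutes with the present system variable and its adjoint. -/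
/-!
Write `⁅a, b⁆ = a * b - b * a`. The bracket is bilinear and kills the scalar parts, so for
`y = γ x + c + w` and `x' = φ x + d + v` the cross terms `⁅x, v⁆`, `⁅w, x⁆` vanish by the
commutation hypotheses and `⁅y, x'⁆ = γ φ ⁅x, x⁆ + ⁅w, v⁆ = 0`. The same expansion against
`star x' = φ̄ x* + d̄ + v*` gives `⁅y, star x'⁆ = γ φ̄ ⁅x, x*⁆ + ⁅w, v*⁆ = γ φ̄ ℏ - φ̄ γ ℏ = 0`:
the noise commutator is chosen exactly to cancel the canonical one.
-/

attribute [local instance] LieRing.ofAssociativeRing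

section Bracket

variable {R A : Type*} [CommRing R] [Ring A] [Algebra R A]

theorem lie_smul_add_smul_one_add {x z w v : A} (hxv : Commute x v) (hwz : Commute w z)
    (a b c d : R) :
    ⁅a • x + c • (1 : A) + w, b • z + d • (1 : A) + v⁆ = (a * b) • ⁅x, z⁆ + ⁅w, v⁆ := by
  have h_one_left (y : A) : ⁅(1 : A), y⁆ = 0 := commute_iff_lie_eq.mp (Commute.one_left y)
  have h_one_right (y : A) : ⁅y, (1 : A)⁆ = 0 := commute_iff_lie_eq.mp (Commute.one_right y)
  simp only [add_lie, lie_add, smul_lie, LieAlgebra.lie_smul, h_one_left, h_one_right,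
    commute_iff_lie_eq.mp hxv, commute_iff_lie_eq.mp hwz, smul_zero, smul_smul, add_zero,
    zero_add]
  rw [mul_comm b a]

end Bracket

theorem star_smul_add_smul_one_add {R A : Type*} [CommRing R] [StarRing R] [Ring A]
    [StarRing A] [Algebra R A] [StarModule R A] (a c : R) (x v : A) :
    star (a • x + c • (1 : A) + v) = star a • star x + star c • (1 : A) + star v := by
  simp only [star_add, star_smul, star_one]

theorem output_nondemolition_general
    {A : Type*} [Ring A] [Algebra ℂ A] [StarRing A] [StarModule ℂ A]
    (ℏ : ℝ) (φ β γ δ : ℂ) (u u' : ℂ) (x v w : A)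
    (hxv : x * v = v * x)
    (hxvs : x * star v = star v * x)
    (hxw : x * w = w * x)
    (hxws : x * star w = star w * x)
    (hvw : v * w = w * v)
    (hx : x * star x - star x * x = (ℏ : ℂ) • (1 : A))
    (hwv : w * star v - star v * w
        = -(((starRingEnd ℂ) φ * γ) * (ℏ : ℂ)) • (1 : A)) :
    (γ • x + (δ * u') • (1 : A) + w) * (φ • x + (β * u) • (1 : A) + v)
      = (φ • x + (β * u) • (1 : A) + v) * (γ • x + (δ * u') • (1 : A) + w)
    ∧ (γ • x + (δ * u') • (1 : A) + w) * star (φ • x + (β * u) • (1 : A) + v)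
      = star (φ • x + (β * u) • (1 : A) + v) * (γ • x + (δ * u') • (1 : A) + w) := by
  have hwxs : Commute w (star x) := (Commute.star_left hxws).symm
  refine ⟨commute_iff_lie_eq.mpr ?_, commute_iff_lie_eq.mpr ?_⟩
  · rw [lie_smul_add_smul_one_add hxv hxw.symm, lie_self, commute_iff_lie_eq.mp hvw.symm,
      smul_zero, add_zero]
  · rw [star_smul_add_smul_one_add, lie_smul_add_smul_one_add hxvs hwxs, Ring.lie_def,
      Ring.lie_def, hx, hwv, smul_smul, ← add_smul, starRingEnd_apply, mul_comm γ,
      add_neg_cancel, zero_smul]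

/-- Nondemolition property of the output: the output `y = γ·x + δ·u'·1 + w` commutes
with the updated system element `x' = φ·x + β·u·1 + v` and with its adjoint, given
the choice of commutator `[w, v*] = −conj(φ)·γ·ℏ·1`. -/
theorem output_nondemolition
    {A : Type*} [Ring A] [Algebra ℂ A] [StarRing A] [StarModule ℂ A]
    (ℏ : ℝ) (hℏ : 0 < ℏ) (φ β γ δ : ℂ) (u u' : ℂ) (x v w : A)
    (hxv : x * v = v * x)
    (hxvs : x * star v = star v * x)
    (hxw : x * w = w * x)
    (hxws : x * star w = star w * x)
    (hvw : v * w = w * v)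
    (hx : x * star x - star x * x = (ℏ : ℂ) • (1 : A))
    (hwv : w * star v - star v * w
        = -(((starRingEnd ℂ) φ * γ) * (ℏ : ℂ)) • (1 : A)) :
    (γ • x + (δ * u') • (1 : A) + w) * (φ • x + (β * u) • (1 : A) + v)
      = (φ • x + (β * u) • (1 : A) + v) * (γ • x + (δ * u') • (1 : A) + w)
    ∧ (γ • x + (δ * u') • (1 : A) + w) * star (φ • x + (β * u) • (1 : A) + v)
      = star (φ • x + (β * u) • (1 : A) + v) * (γ • x + (δ * u') • (1 : A) + w) :=
  output_nondemolition_general ℏ φ β γ δ u u' x v w hxv hxvs hxw hxws hvw hx hwv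
end

section
/- Positivity of the posterior variance in the quantum Kalman filter: let Σ > 0, σ, ν > 0, υ, φ, γ ∈ ℂ with σν − |υ|² > 0. Then the updated variance parameter Σ₁ := |φ|²Σ + σ − |φ·conj(γ)·Σ − υ|²/(|γ|²Σ + ν) is strictly positive. -/
/-- Positivity of the posterior variance parameter in the one-step quantum Kalman
filter. -/
theorem kalman_posterior_variance_pos
    (Sg σ ν : ℝ) (υ φ γ : ℂ)
    (hSg : 0 < Sg) (hσ : 0 < σ) (hν : 0 < ν)
    (hD : 0 < σ * ν - ‖υ‖ ^ 2) :
    0 < ‖φ‖ ^ 2 * Sg + σ -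
        ‖φ * (starRingEnd ℂ) γ * (Sg : ℂ) - υ‖ ^ 2 /
          (‖γ‖ ^ 2 * Sg + ν) := by
  set A := ‖φ‖ with hA
  set G := ‖γ‖ with hG
  set U := ‖υ‖ with hU
  have hA0 : 0 ≤ A := norm_nonneg _
  have hG0 : 0 ≤ G := norm_nonneg _
  have hU0 : 0 ≤ U := norm_nonneg _
  have hΨ : 0 < G ^ 2 * Sg + ν := by positivity
  have htri : ‖φ * (starRingEnd ℂ) γ * (Sg : ℂ) - υ‖ ≤ A * G * Sg + U := by
    calc ‖φ * (starRingEnd ℂ) γ * (Sg : ℂ) - υ‖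
        ≤ ‖φ * (starRingEnd ℂ) γ * (Sg : ℂ)‖ + ‖υ‖ :=
          norm_sub_le _ _
      _ = A * G * Sg + U := by
          simp [norm_mul, Complex.norm_conj, Complex.norm_real, abs_of_pos hSg, A, G, U]
  have hsq : ‖φ * (starRingEnd ℂ) γ * (Sg : ℂ) - υ‖ ^ 2
      ≤ (A * G * Sg + U) ^ 2 := by
    have := norm_nonneg (φ * (starRingEnd ℂ) γ * (Sg : ℂ) - υ)
    nlinarith
  rw [sub_pos, div_lt_iff₀ hΨ]
  have key : (A * G * Sg + U) ^ 2 < (A ^ 2 * Sg + σ) * (G ^ 2 * Sg + ν) := by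
    have hσs := Real.sq_sqrt hσ.le
    have hνs := Real.sq_sqrt hν.le
    have hσn := Real.sqrt_nonneg σ
    have hνn := Real.sqrt_nonneg ν
    have hUs : U ≤ Real.sqrt σ * Real.sqrt ν := by
      nlinarith [sq_nonneg (U - Real.sqrt σ * Real.sqrt ν), mul_nonneg hσn hνn]
    have h1 : 2 * A * G * U ≤ A ^ 2 * ν + G ^ 2 * σ := by
      nlinarith [sq_nonneg (A * Real.sqrt ν - G * Real.sqrt σ),
        mul_nonneg (mul_nonneg hA0 hG0) (sub_nonneg.mpr hUs)]
    nlinarith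
  linarith
end

section
/- Positivity of the control Riccati recursion: let φ, β, ϑ ∈ ℂ, ω ≥ 0, ϑ¹ > 0 with |ϑ|² ≤ ω·ϑ¹, and Ω' ≥ 0. Then Ω₀ := |φ|²Ω' + ω − |φ·conj(β)·Ω' − ϑ|²/(|β|²Ω' + ϑ¹) ≥ 0. Hence all coefficients Ω_k produced by the backward recursion Ω_k = |φ|²Ω_{k+1} + ω − |λ_k|²Υ_k with Ω_K = Ω ≥ 0, Υ_k = |β|²Ω_{k+1} + ϑ¹, λ_k = (φ·conj(β)·Ω_{k+1} − ϑ)/Υ_k, are nonnegative. -/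
lemma riccati_step_nonneg
    (φ β ϑ : ℂ) (ω ϑ1 : ℝ) (hω : 0 ≤ ω) (hϑ1 : 0 < ϑ1)
    (hϑ : (‖ϑ‖) ^ 2 ≤ ω * ϑ1) (Ω' : ℝ) (hΩ : 0 ≤ Ω') :
    0 ≤ (‖φ‖) ^ 2 * Ω' + ω -
        (‖φ * (starRingEnd ℂ) β * (Ω' : ℂ) - ϑ‖) ^ 2 /
          ((‖β‖) ^ 2 * Ω' + ϑ1) := by
  have hD : 0 < (‖β‖) ^ 2 * Ω' + ϑ1 := by positivity
  rw [sub_nonneg, div_le_iff₀ hD]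
  have habs : ‖φ * (starRingEnd ℂ) β * (Ω' : ℂ) - ϑ‖
      ≤ ‖φ‖ * ‖β‖ * Ω' + ‖ϑ‖ := by
    calc ‖φ * (starRingEnd ℂ) β * (Ω' : ℂ) - ϑ‖
        ≤ ‖φ * (starRingEnd ℂ) β * (Ω' : ℂ)‖ + ‖ϑ‖ :=
          (norm_sub_le _ _)
      _ = ‖φ‖ * ‖β‖ * Ω' + ‖ϑ‖ := by
          rw [norm_mul, norm_mul, Complex.norm_conj, Complex.norm_real, Real.norm_eq_abs,
            abs_of_nonneg hΩ]
  have h1 : (‖φ * (starRingEnd ℂ) β * (Ω' : ℂ) - ϑ‖) ^ 2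
      ≤ (‖φ‖ * ‖β‖ * Ω' + ‖ϑ‖) ^ 2 := by
    apply pow_le_pow_left₀ (norm_nonneg _) habs
  refine h1.trans ?_
  -- need (ab Ω' + c)² ≤ (a²Ω'+ω)(b²Ω'+ϑ1) where a=|φ|, b=|β|, c=|ϑ|, c² ≤ ωϑ1
  set a := ‖φ‖
  set b := ‖β‖
  set c := ‖ϑ‖
  have ha : 0 ≤ a := norm_nonneg _
  have hb : 0 ≤ b := norm_nonneg _
  have hc : 0 ≤ c := norm_nonneg _
  have key : 2 * (a * b * c) ≤ a ^ 2 * ϑ1 + b ^ 2 * ω := by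
    nlinarith [sq_nonneg (a * ϑ1 - b * c), sq_nonneg (a * c - b * ω),
      mul_pos hϑ1 hϑ1, sq_nonneg (a*Real.sqrt ϑ1 - b*Real.sqrt ω),
      Real.sq_sqrt hϑ1.le, Real.sq_sqrt hω, Real.sqrt_nonneg ϑ1, Real.sqrt_nonneg ω,
      mul_nonneg (Real.sqrt_nonneg ω) (Real.sqrt_nonneg ϑ1),
      Real.sqrt_mul_self hω]
  nlinarith [mul_nonneg (mul_nonneg ha hb) hΩ, sq_nonneg (a*b*Ω'),
    mul_nonneg hΩ hΩ, mul_nonneg (mul_nonneg (mul_nonneg ha hb) hc) hΩ]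

/-- Positivity of the control Riccati recursion: under `|ϑ|² ≤ ω·ϑ¹` a single backward
Riccati step preserves nonnegativity, and hence all coefficients `Ω_k` of the backward
recursion starting from `Ω_K ≥ 0` are nonnegative. -/
theorem control_riccati_nonneg
    (φ β ϑ : ℂ) (ω ϑ1 : ℝ) (hω : 0 ≤ ω) (hϑ1 : 0 < ϑ1)
    (hϑ : (‖ϑ‖) ^ 2 ≤ ω * ϑ1) :
    (∀ Ω' : ℝ, 0 ≤ Ω' →
        0 ≤ (‖φ‖) ^ 2 * Ω' + ω -
            (‖φ * (starRingEnd ℂ) β * (Ω' : ℂ) - ϑ‖) ^ 2 /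
              ((‖β‖) ^ 2 * Ω' + ϑ1))
    ∧ ∀ (K : ℕ) (Ω : ℕ → ℝ), 0 ≤ Ω K →
        (∀ k, k < K →
          Ω k = (‖φ‖) ^ 2 * Ω (k + 1) + ω -
              (‖(φ * (starRingEnd ℂ) β * (Ω (k + 1) : ℂ) - ϑ) /
                  (((‖β‖) ^ 2 * Ω (k + 1) + ϑ1 : ℝ) : ℂ)‖) ^ 2 *
                ((‖β‖) ^ 2 * Ω (k + 1) + ϑ1)) →
        ∀ k, k ≤ K → 0 ≤ Ω k := by
  constructor
  · exact fun Ω' hΩ => riccati_step_nonneg φ β ϑ ω ϑ1 hω hϑ1 hϑ Ω' hΩ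
  · intro K Ω hK hrec
    have H : ∀ d k, k + d = K → 0 ≤ Ω k := by
      intro d
      induction d with
      | zero =>
        intro k h
        have hkK : k = K := by omega
        exact hkK ▸ hK
      | succ d ih =>
        intro k h
        have h0 : 0 ≤ Ω (k + 1) := ih (k + 1) (by omega)
        have hD : 0 < (‖β‖) ^ 2 * Ω (k + 1) + ϑ1 := by positivity
        have heq : (‖(φ * (starRingEnd ℂ) β * (Ω (k + 1) : ℂ) - ϑ) /
              (((‖β‖) ^ 2 * Ω (k + 1) + ϑ1 : ℝ) : ℂ)‖) ^ 2 *
              ((‖β‖) ^ 2 * Ω (k + 1) + ϑ1)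
            = (‖φ * (starRingEnd ℂ) β * (Ω (k + 1) : ℂ) - ϑ‖) ^ 2 /
              ((‖β‖) ^ 2 * Ω (k + 1) + ϑ1) := by
          rw [norm_div, Complex.norm_real, Real.norm_eq_abs, abs_of_pos hD, div_pow]
          field_simp
        rw [hrec k (by omega), heq]
        exact riccati_step_nonneg φ β ϑ ω ϑ1 hω hϑ1 hϑ _ h0
    intro k hk
    exact H (K - k) k (by omega)
end

section
/- Sufficiency part of the optimality conditions for quantum measurement (Theorem 2, sufficiency, finite-dimensional case): let n ≥ 1, let Z be a finite type, and for each z ∈ Z let R z be a Hermitian n×n complex matrix (risk operator). Call b : Z → Matrix n n ℂ a POVM if each b z is positive semidefinite and ∑_z b z = 1. Define the cost C(b) := Re(trace(∑_z (R z) * (b z))). Suppose b° is a POVM such that Λ := ∑_z (R z) * (b° z) is Hermitian and R z − Λ is positive semidefinite for every z ∈ Z. Then for every POVM b one has C(b) ≥ Re(trace Λ) = C(b°); i.e. b° minimizes the cost over all POVMs with minimal value Re(trace Λ). -/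
open ComplexOrder

lemma trace_nonneg_of_posSemidef {m : Type*} [Fintype m] [DecidableEq m]
    {M : Matrix m m ℂ} (hM : M.PosSemidef) : 0 ≤ M.trace := by
  have hdiag : ∀ i, 0 ≤ M i i := fun i => by
    exact hM.diag_nonneg
  exact Finset.sum_nonneg fun i _ => hdiag i

open scoped MatrixOrder in
lemma trace_mul_nonneg_of_posSemidef {m : Type*} [Fintype m] [DecidableEq m]
    {A B : Matrix m m ℂ} (hA : A.PosSemidef) (hB : B.PosSemidef) :
    0 ≤ (A * B).trace := by
  have h1 : A * B = CFC.sqrt A * (CFC.sqrt A * B) := by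
    rw [← mul_assoc, CFC.sqrt_mul_sqrt_self A hA.nonneg]
  have h2 : (A * B).trace = (CFC.sqrt A * B * CFC.sqrt A).trace := by
    rw [h1, mul_assoc, Matrix.trace_mul_comm, ← mul_assoc]
  have h3 : (CFC.sqrt A * B * CFC.sqrt A).PosSemidef := by
    have := hB.conjTranspose_mul_mul_same (CFC.sqrt A)
    rwa [(Matrix.nonneg_iff_posSemidef.mp (CFC.sqrt_nonneg A)).1.eq] at this
  rw [h2]
  exact trace_nonneg_of_posSemidef h3

/-- Sufficiency part of the optimality conditions for quantum measurement
(Theorem 2, finite-dimensional case): if `b°` is a POVM such that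
`Λ := ∑ z, R z * b° z` is Hermitian and `R z − Λ` is positive semidefinite for all
`z`, then `b°` minimizes the cost `C(b) = Re tr(∑ z, R z * b z)` over all POVMs,
with minimal value `Re tr Λ`. -/
theorem povm_optimality_sufficient
    (n : ℕ) (hn : 1 ≤ n) (Z : Type*) [Fintype Z]
    (R : Z → Matrix (Fin n) (Fin n) ℂ) (hR : ∀ z, (R z).IsHermitian)
    (b₀ : Z → Matrix (Fin n) (Fin n) ℂ)
    (hb₀pos : ∀ z, (b₀ z).PosSemidef) (hb₀sum : ∑ z, b₀ z = 1)
    (hΛherm : (∑ z, R z * b₀ z).IsHermitian)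
    (hΛopt : ∀ z, (R z - ∑ z', R z' * b₀ z').PosSemidef) :
    ∀ b : Z → Matrix (Fin n) (Fin n) ℂ,
      (∀ z, (b z).PosSemidef) → ∑ z, b z = 1 →
        ((∑ z, R z * b z).trace).re ≥ ((∑ z, R z * b₀ z).trace).re
        ∧ ((∑ z, R z * b₀ z).trace).re = ((∑ z, R z * b₀ z).trace).re := by
  intro b hbpos hbsum
  refine ⟨?_, rfl⟩
  set Λ := ∑ z', R z' * b₀ z' with hΛ
  have key : ∑ z, R z * b z - Λ = ∑ z, (R z - Λ) * b z := by
    simp only [Matrix.sub_mul, Finset.sum_sub_distrib, ← Finset.mul_sum, hbsum, mul_one]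
  have hpos : 0 ≤ (∑ z, (R z - Λ) * b z).trace := by
    rw [Matrix.trace_sum]
    exact Finset.sum_nonneg fun z _ =>
      trace_mul_nonneg_of_posSemidef (hΛopt z) (hbpos z)
  have := key ▸ hpos
  have h2 : 0 ≤ ((∑ z, R z * b z).trace - Λ.trace) := by
    rwa [← Matrix.trace_sub]
  have h3 : 0 ≤ ((∑ z, R z * b z).trace - Λ.trace).re := Complex.le_def.mp h2 |>.1
  simp only [Complex.sub_re] at h3
  linarith
end

section
/- Necessity part of the optimality conditions for quantum measurement (Theorem 2, necessity, finite-dimensional case): let n ≥ 1, Z a finite type, R z Hermitian n×n complex matrices, and let b° be a POVM minimizing the cost C(b) := Re(trace(∑_z (R z)(b z))) over all POVMs b : Z → Matrix n n ℂ. Then the operator Λ := ∑_z (R z)(b° z) is Hermitian, (R z − Λ)·(b° z) = 0 for every z ∈ Z, and R z − Λ is positive semidefinite for every z ∈ Z. -/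
open ComplexOrder
open Matrix

private lemma aux_trace_ctms {m p : Type*} [Fintype m] [Fintype p] (C : Matrix m p ℂ) :
    0 ≤ (Cᴴ * C).trace ∧ ((Cᴴ * C).trace = 0 → C = 0) := by
  have htr : (Cᴴ * C).trace = ∑ j, ∑ i, star (C i j) * C i j := by
    simp [Matrix.trace, Matrix.mul_apply, Matrix.conjTranspose_apply, Matrix.diag]
  have hnn : ∀ j ∈ Finset.univ (α := p), 0 ≤ ∑ i, star (C i j) * C i j :=
    fun j _ => Finset.sum_nonneg fun i _ => star_mul_self_nonneg _
  constructor
  · rw [htr]; exact Finset.sum_nonneg hnn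
  · intro h
    rw [htr] at h
    ext i j
    have h1 := (Finset.sum_eq_zero_iff_of_nonneg hnn).mp h j (Finset.mem_univ j)
    have h2 := (Finset.sum_eq_zero_iff_of_nonneg
      (fun i _ => star_mul_self_nonneg (C i j))).mp h1 i (Finset.mem_univ i)
    rcases mul_eq_zero.mp h2 with h3 | h3
    · simpa using star_eq_zero.mp h3
    · simpa using h3

private lemma aux_psd_mul_trace {m : Type*} [Fintype m] [DecidableEq m] {A B : Matrix m m ℂ}
    (hA : A.PosSemidef) (hB : B.PosSemidef) :
    0 ≤ (A * B).trace ∧ ((A * B).trace = 0 → A * B = 0) := by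
  obtain ⟨X, hX⟩ : ∃ X : Matrix m m ℂ, A = Xᴴ * X := by
    open scoped MatrixOrder in exact CStarAlgebra.nonneg_iff_eq_star_mul_self.mp hA.nonneg
  obtain ⟨Y, hY⟩ : ∃ Y : Matrix m m ℂ, B = Yᴴ * Y := by
    open scoped MatrixOrder in exact CStarAlgebra.nonneg_iff_eq_star_mul_self.mp hB.nonneg
  have key : (A * B).trace = ((X * Yᴴ)ᴴ * (X * Yᴴ)).trace := by
    rw [hX, hY, Matrix.conjTranspose_mul, Matrix.conjTranspose_conjTranspose]
    rw [show Xᴴ * X * (Yᴴ * Y) = (Xᴴ * X * Yᴴ) * Y from by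
      simp only [Matrix.mul_assoc]]
    rw [Matrix.trace_mul_comm]
    simp only [Matrix.mul_assoc]
  constructor
  · rw [key]; exact (aux_trace_ctms _).1
  · intro h
    have hC : X * Yᴴ = 0 := (aux_trace_ctms _).2 (key ▸ h)
    calc A * B = Xᴴ * (X * Yᴴ) * Y := by rw [hX, hY]; simp only [Matrix.mul_assoc]
    _ = 0 := by rw [hC]; simp

private lemma aux_limit {a b ε : ℝ} (hε : 0 < ε)
    (h : ∀ t : ℝ, 0 < t → t ≤ ε → 0 ≤ t * a + t ^ 2 * b) : 0 ≤ a := by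
  by_contra hneg
  push_neg at hneg
  have hb : 0 < |b| + 1 := by positivity
  set t := min ε (-a / (2 * (|b| + 1))) with ht
  have ht0 : 0 < t := lt_min hε (div_pos (by linarith) (by positivity))
  have h1 : t ≤ -a / (2 * (|b| + 1)) := min_le_right _ _
  have h2 := h t ht0 (min_le_left _ _)
  have h3 : t * b ≤ t * |b| := mul_le_mul_of_nonneg_left (le_abs_self b) ht0.le
  have h4 : t * (2 * (|b| + 1)) ≤ -a := (le_div_iff₀ (by positivity)).mp h1
  nlinarith [abs_nonneg b, sq_nonneg t]

private lemma aux_trace_mul_vecMulVec {m : Type*} [Fintype m] (A : Matrix m m ℂ) (x : m → ℂ) :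
    (A * Matrix.vecMulVec x (star x)).trace = dotProduct (star x) (A *ᵥ x) := by
  simp only [Matrix.trace, Matrix.diag, Matrix.mul_apply, Matrix.vecMulVec_apply,
    dotProduct, Matrix.mulVec, Pi.star_apply]
  refine Finset.sum_congr rfl fun i _ => ?_
  rw [Finset.mul_sum]
  exact Finset.sum_congr rfl fun j _ => by ring

private lemma aux_psd_smul {m : Type*} [Fintype m] {A : Matrix m m ℂ} (hA : A.PosSemidef)
    {r : ℝ} (hr : 0 ≤ r) : ((r : ℂ) • A).PosSemidef := by
  exact hA.smul (Complex.zero_le_real.mpr hr)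

private lemma aux_dot_conjTranspose {m : Type*} [Fintype m] (M : Matrix m m ℂ) (x : m → ℂ) :
    star (dotProduct (star x) (M *ᵥ x)) = dotProduct (star x) (Mᴴ *ᵥ x) := by
  calc star (dotProduct (star x) (M *ᵥ x))
      = dotProduct (star (M *ᵥ x)) (star (star x)) := by
        simp [dotProduct, mul_comm]
    _ = dotProduct (star x) (Mᴴ *ᵥ x) := by
        rw [star_star, Matrix.star_mulVec, ← Matrix.dotProduct_mulVec]



/-- Necessity part of the optimality conditions for quantum measurement
(Theorem 2, finite-dimensional case): if the POVM `b°` minimizes the cost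
`C(b) = Re tr(∑ z, R z * b z)` over all POVMs, then `Λ := ∑ z, R z * b° z` is
Hermitian, `(R z − Λ)·b° z = 0` for all `z`, and `R z − Λ` is positive semidefinite
for all `z`. -/
theorem povm_optimality_necessary
    (n : ℕ) (hn : 1 ≤ n) (Z : Type*) [Fintype Z]
    (R : Z → Matrix (Fin n) (Fin n) ℂ) (hR : ∀ z, (R z).IsHermitian)
    (b₀ : Z → Matrix (Fin n) (Fin n) ℂ)
    (hb₀pos : ∀ z, (b₀ z).PosSemidef) (hb₀sum : ∑ z, b₀ z = 1)
    (hopt : ∀ b : Z → Matrix (Fin n) (Fin n) ℂ,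
      (∀ z, (b z).PosSemidef) → ∑ z, b z = 1 →
        ((∑ z, R z * b₀ z).trace).re ≤ ((∑ z, R z * b z).trace).re) :
    (∑ z, R z * b₀ z).IsHermitian
    ∧ (∀ z, (R z - ∑ z', R z' * b₀ z') * b₀ z = 0)
    ∧ (∀ z, (R z - ∑ z', R z' * b₀ z').PosSemidef) := by
  classical
  set Λ : Matrix (Fin n) (Fin n) ℂ := ∑ z', R z' * b₀ z' with hΛ
  set ΛH : Matrix (Fin n) (Fin n) ℂ := (1/2 : ℂ) • (Λ + Λᴴ) with hΛHdef
  have hΛconj : Λᴴ = ∑ w, b₀ w * R w := by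
    rw [hΛ, Matrix.conjTranspose_sum]
    exact Finset.sum_congr rfl fun w _ => by
      rw [Matrix.conjTranspose_mul, hR w, (hb₀pos w).1]
  have hΛHherm : ΛH.IsHermitian := by
    show _ = _
    rw [hΛHdef, Matrix.conjTranspose_smul, Matrix.conjTranspose_add,
      Matrix.conjTranspose_conjTranspose]
    rw [show star (1/2 : ℂ) = (1/2 : ℂ) from by simp, add_comm]
  -- Step 1: key inequality from optimality
  have hkey : ∀ (y : Z) (x : Fin n → ℂ),
      ((Λ * Matrix.vecMulVec x (star x)).trace).re
        ≤ ((R y * Matrix.vecMulVec x (star x)).trace).re := by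
    intro y x
    set P : Matrix (Fin n) (Fin n) ℂ := Matrix.vecMulVec x (star x) with hPdef
    have hPherm : Pᴴ = P := by
      ext i j
      simp [hPdef, Matrix.conjTranspose_apply, Matrix.vecMulVec_apply, mul_comm]
    have hPpsd : P.PosSemidef := by
      have hfac : P = (Matrix.replicateRow (Fin 1) (star x))ᴴ * Matrix.replicateRow (Fin 1) (star x) := by
        ext i j
        simp [hPdef, Matrix.mul_apply, Matrix.replicateRow_apply, Matrix.conjTranspose_apply,
          Matrix.vecMulVec_apply]
      rw [hfac]
      exact Matrix.posSemidef_conjTranspose_mul_self _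
    set sr : ℝ := (dotProduct (star x) x).re with hsr
    have hs0 : (0:ℂ) ≤ dotProduct (star x) x := dotProduct_star_self_nonneg x
    have hsr0 : 0 ≤ sr := by
      rw [hsr]
      simpa using (Complex.le_def.mp hs0).1
    have hsC : dotProduct (star x) x = (sr : ℂ) := by
      have him := (Complex.le_def.mp hs0).2
      apply Complex.ext
      · simp [hsr]
      · simp [hsr, ← him]
    have hPP : P * P = (sr : ℂ) • P := by
      rw [← hsC]
      ext i j
      simp only [Matrix.mul_apply, hPdef, Matrix.vecMulVec_apply, Matrix.smul_apply,
        dotProduct, smul_eq_mul, Pi.star_apply]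
      rw [Finset.sum_mul]
      exact Finset.sum_congr rfl fun k _ => by ring
    set a1 : ℝ := ((Λᴴ * P).trace).re with ha1def
    set a2 : ℝ := ((Λ * P).trace).re with ha2def
    set a4 : ℝ := ((R y * P).trace).re with ha4def
    set e : ℝ := ((∑ w, R w * (P * (b₀ w * P))).trace).re with hedef
    have hcyc : (∑ w, R w * (P * b₀ w)).trace = (Λᴴ * P).trace := by
      rw [Matrix.trace_sum]
      calc ∑ w, (R w * (P * b₀ w)).trace = ∑ w, ((b₀ w * R w) * P).trace := by
            refine Finset.sum_congr rfl fun w _ => ?_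
            rw [Matrix.trace_mul_comm, Matrix.mul_assoc, Matrix.trace_mul_comm]
      _ = (Λᴴ * P).trace := by rw [hΛconj, Finset.sum_mul, Matrix.trace_sum]
    have hmain : ∀ t : ℝ, 0 < t → t ≤ 1/(sr+1) →
        0 ≤ t * (2*a4 - a1 - a2) + t^2 * (e - sr*a4) := by
      intro t ht0 htε
      set coef : ℝ := t * (2 - t*sr) with hcoefdef
      have htsr : t * sr ≤ 1 := by
        have h1 : t * (sr + 1) ≤ 1 := by
          rw [← le_div_iff₀ (by positivity)]
          exact htε
        nlinarith
      have hcoef0 : 0 ≤ coef := by nlinarith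
      set St : Matrix (Fin n) (Fin n) ℂ := 1 - (t:ℂ) • P with hStdef
      have hStH : Stᴴ = St := by
        rw [hStdef, Matrix.conjTranspose_sub, Matrix.conjTranspose_smul,
          Matrix.conjTranspose_one, hPherm, Complex.star_def, Complex.conj_ofReal]
      set c : Z → Matrix (Fin n) (Fin n) ℂ :=
        fun w => St * b₀ w * St + (if w = y then ((coef:ℝ):ℂ) • P else 0) with hcdef
      have hcpsd : ∀ w, (c w).PosSemidef := by
        intro w
        apply Matrix.PosSemidef.add
        · have h := (hb₀pos w).mul_mul_conjTranspose_same St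
          rwa [hStH] at h
        · split
          · exact aux_psd_smul hPpsd hcoef0
          · exact Matrix.PosSemidef.zero
      have hcsum : ∑ w, c w = 1 := by
        rw [show ∑ w, c w = (∑ w, St * b₀ w * St)
            + ∑ w, (if w = y then ((coef:ℝ):ℂ) • P else 0) from Finset.sum_add_distrib]
        rw [Finset.sum_ite_eq' Finset.univ y, if_pos (Finset.mem_univ y)]
        rw [show ∑ w, St * b₀ w * St = St * (∑ w, b₀ w) * St from by
          rw [Finset.mul_sum, Finset.sum_mul], hb₀sum, mul_one]
        rw [hStdef]
        simp only [sub_mul, mul_sub, Matrix.smul_mul, Matrix.mul_smul, mul_one, one_mul,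
          hPP, smul_smul]
        rw [hcoefdef]
        push_cast
        module
      have hineq := hopt c hcpsd hcsum
      have expand : ∀ w, R w * c w
          = R w * b₀ w - (t:ℂ) • (R w * (P * b₀ w)) - (t:ℂ) • (R w * b₀ w * P)
            + (((t*t : ℝ)):ℂ) • (R w * (P * (b₀ w * P)))
            + (if w = y then ((coef:ℝ):ℂ) • (R w * P) else 0) := by
        intro w
        rw [hcdef]
        simp only [mul_add, mul_ite, Matrix.mul_smul, mul_zero, hStdef, sub_mul, mul_sub,
          Matrix.smul_mul, one_mul, mul_one, smul_smul, Matrix.mul_assoc]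
        push_cast
        split <;> module
      have hmat : ∑ w, R w * c w
          = Λ - (t:ℂ) • (∑ w, R w * (P * b₀ w)) - (t:ℂ) • (Λ * P)
            + (((t*t : ℝ)):ℂ) • (∑ w, R w * (P * (b₀ w * P)))
            + ((coef:ℝ):ℂ) • (R y * P) := by
        rw [Finset.sum_congr rfl fun w _ => expand w]
        simp only [Finset.sum_add_distrib, Finset.sum_sub_distrib, ← Finset.smul_sum,
          Finset.sum_ite_eq', Finset.mem_univ, if_true, ← Finset.sum_mul, ← hΛ]
      have htr := congrArg Matrix.trace hmat
      rw [Matrix.trace_add, Matrix.trace_add, Matrix.trace_sub, Matrix.trace_sub,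
        Matrix.trace_smul, Matrix.trace_smul, Matrix.trace_smul, Matrix.trace_smul,
        hcyc] at htr
      rw [htr] at hineq
      simp only [smul_eq_mul, Complex.add_re, Complex.sub_re, Complex.re_ofReal_mul,
        ← ha1def, ← ha2def, ← ha4def, ← hedef] at hineq
      rw [hcoefdef] at hineq
      nlinarith [hineq]
    have hε : 0 < 1/(sr+1) := by positivity
    have h2 := aux_limit hε hmain
    have ha12 : a1 = a2 := by
      have hstar : (Λᴴ * P).trace = star ((Λ * P).trace) := by
        calc (Λᴴ * P).trace = ((P * Λ)ᴴ).trace := by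
              rw [Matrix.conjTranspose_mul, hPherm]
        _ = star ((P * Λ).trace) := Matrix.trace_conjTranspose _
        _ = star ((Λ * P).trace) := by rw [Matrix.trace_mul_comm]
      rw [ha1def, ha2def, hstar]
      simp [Complex.star_def]
    have : a2 ≤ a4 := by linarith
    exact this
  have hstep1 : ∀ y, (R y - ΛH).PosSemidef := by
    intro y
    refine Matrix.PosSemidef.of_dotProduct_mulVec_nonneg ((hR y).sub hΛHherm) fun x => ?_
    have h1 := hkey y x
    rw [aux_trace_mul_vecMulVec, aux_trace_mul_vecMulVec] at h1
    have hRim : (dotProduct (star x) (R y *ᵥ x)).im = 0 := by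
      have := aux_dot_conjTranspose (R y) x
      rw [hR y] at this
      have := congrArg Complex.im this
      simp only [Complex.star_def, Complex.conj_im] at this
      linarith
    have hq : dotProduct (star x) ((R y - ΛH) *ᵥ x)
        = dotProduct (star x) (R y *ᵥ x)
          - (((dotProduct (star x) (Λ *ᵥ x)).re : ℝ) : ℂ) := by
      rw [Matrix.sub_mulVec, dotProduct_sub]
      congr 1
      rw [hΛHdef, Matrix.smul_mulVec, dotProduct_smul, smul_eq_mul,
        Matrix.add_mulVec, dotProduct_add, ← aux_dot_conjTranspose,
        Complex.star_def, Complex.add_conj]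
      push_cast
      ring
    rw [hq, Complex.le_def]
    constructor
    · simp only [Complex.zero_re, Complex.sub_re, Complex.ofReal_re]
      linarith
    · simp only [Complex.zero_im, Complex.sub_im, Complex.ofReal_im, hRim]
      ring
  -- Step 2: zero products
  have hzero : ∀ y, (R y - ΛH) * b₀ y = 0 := by
    have htrΛ : star Λ.trace = Λ.trace := by
      rw [← Matrix.trace_conjTranspose, hΛconj, hΛ, Matrix.trace_sum, Matrix.trace_sum]
      exact Finset.sum_congr rfl fun w _ => Matrix.trace_mul_comm _ _
    have hsumzero : ∑ y, ((R y - ΛH) * b₀ y).trace = 0 := by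
      have hs : ∑ y, (R y - ΛH) * b₀ y = Λ - ΛH := by
        simp only [Matrix.sub_mul, Finset.sum_sub_distrib, ← Finset.mul_sum, hb₀sum,
          mul_one, ← hΛ]
      rw [← Matrix.trace_sum, hs, Matrix.trace_sub]
      have htrH : ΛH.trace = Λ.trace := by
        rw [hΛHdef, Matrix.trace_smul, Matrix.trace_add, Matrix.trace_conjTranspose,
          htrΛ, smul_eq_mul]
        ring
      rw [htrH, sub_self]
    intro y
    have hnn : ∀ y ∈ Finset.univ (α := Z), 0 ≤ ((R y - ΛH) * b₀ y).trace :=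
      fun y _ => (aux_psd_mul_trace (hstep1 y) (hb₀pos y)).1
    have h0 := (Finset.sum_eq_zero_iff_of_nonneg hnn).mp hsumzero y (Finset.mem_univ y)
    exact (aux_psd_mul_trace (hstep1 y) (hb₀pos y)).2 h0
  -- Step 3: Λ = ΛH
  have hΛeq : Λ = ΛH := by
    have hs : Λ = ∑ y, ΛH * b₀ y := by
      rw [hΛ]
      refine Finset.sum_congr rfl fun y _ => ?_
      have h := hzero y
      rw [Matrix.sub_mul, sub_eq_zero] at h
      exact h
    rw [hs, ← Finset.mul_sum, hb₀sum, mul_one]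
  refine ⟨hΛeq ▸ hΛHherm, fun z => ?_, fun z => ?_⟩
  · rw [hΛeq]; exact hzero z
  · rw [hΛeq]; exact hstep1 z
end
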